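/- Let G be a group of permutations of a set X, and let g₁, g₂ ∈ G each have order at least three. If X₁ and X₂ are disjoint nonempty subsets of X such that for all integers n ≠ 0 and all i ≠ j, g_iⁿ(X_j) ⊆ X_i, then g₁ and g₂ generate a free group of rank 2. -/

import Mathlib

/-! Writing the free group on `ι` as the free product of copies of `FreeGroup Unit ≅ ℤ`, the
ping-pong lemma for free products applies: the factors are infinite, and every nontrivial element
of the `i`-th factor acts as a nonzero power of `a i`. -/

open scoped Pointwise Function

theorem Fin.pairwise_two_iff {r : Fin 2 → Fin 2 → Prop} : Pairwise r ↔ r 0 1 ∧ r 1 0 := by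
  refine ⟨fun h => ⟨h Fin.zero_ne_one, h Fin.zero_ne_one.symm⟩, fun ⟨h₀₁, h₁₀⟩ i j hij => ?_⟩
  fin_cases i <;> fin_cases j <;> first | exact absurd rfl hij | assumption

namespace FreeGroup

variable {ι G α : Type*} [Group G] [MulAction G α]

theorem lift_eq_coprodI_lift_comp (a : ι → G) :
    FreeGroup.lift a = (Monoid.CoprodI.lift fun i => FreeGroup.lift fun _ : Unit => a i).comp
      freeGroupEquivCoprodI.toMonoidHom := by
  ext
  simp

theorem exists_zpow_of_unit_eq_of_ne_one {h : FreeGroup Unit} (hne : h ≠ 1) :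
    ∃ n : ℤ, n ≠ 0 ∧ of () ^ n = h := by
  refine ⟨freeGroupUnitEquivInt h, ?_, freeGroupUnitEquivInt.symm_apply_apply h⟩
  rintro hn
  rw [← freeGroupUnitEquivInt.symm_apply_apply h, hn] at hne
  exact hne (zpow_zero _)

theorem injective_lift_of_zpow_ping_pong [Nontrivial ι] (a : ι → G) (X : ι → Set α)
    (hXnonempty : ∀ i, (X i).Nonempty) (hXdisj : Pairwise (Disjoint on X))
    (hpp : Pairwise fun i j => ∀ n : ℤ, n ≠ 0 → a i ^ n • X j ⊆ X i) :
    Function.Injective (FreeGroup.lift a) := by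
  have hcard : ∃ _ : ι, 3 ≤ Cardinal.mk (FreeGroup Unit) :=
    ⟨Classical.arbitrary ι, Cardinal.natCast_le_aleph0.trans (Cardinal.aleph0_le_mk _)⟩
  rw [lift_eq_coprodI_lift_comp, MonoidHom.coe_comp]
  refine (Monoid.CoprodI.lift_injective_of_ping_pong _ (Or.inr hcard) X hXnonempty hXdisj ?_).comp
    freeGroupEquivCoprodI.injective
  intro i j hij h hne
  obtain ⟨n, hn, rfl⟩ := exists_zpow_of_unit_eq_of_ne_one hne
  simpa using hpp hij n hn

end FreeGroup

theorem stmt3 {X : Type*} (g₁ g₂ : Equiv.Perm X)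
    (X₁ X₂ : Set X) (hne₁ : X₁.Nonempty) (hne₂ : X₂.Nonempty)
    (hdisj : Disjoint X₁ X₂)
    (hp₁ : ∀ n : ℤ, n ≠ 0 → ∀ x ∈ X₂, (g₁ ^ n) x ∈ X₁)
    (hp₂ : ∀ n : ℤ, n ≠ 0 → ∀ x ∈ X₁, (g₂ ^ n) x ∈ X₂) :
    Function.Injective ⇑(FreeGroup.lift ![g₁, g₂]) := by
  refine FreeGroup.injective_lift_of_zpow_ping_pong ![g₁, g₂] ![X₁, X₂]
    (Fin.forall_fin_two.2 ⟨hne₁, hne₂⟩) (Fin.pairwise_two_iff.2 ⟨hdisj, hdisj.symm⟩)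
    (Fin.pairwise_two_iff.2 ⟨?_, ?_⟩)
  · rintro n hn _ ⟨x, hx, rfl⟩
    exact hp₁ n hn x hx
  · rintro n hn _ ⟨x, hx, rfl⟩
    exact hp₂ n hn x hx
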